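/- Let (X,d) be a δ-hyperbolic metric space (in the Gromov product sense) and let (x_n) be a finite or infinite sequence in X such that for all n, d(x_{n+2}, x_n) ≥ max(d(x_{n+2}, x_{n+1}), d(x_{n+1}, x_n)) + a + 2δ for some a > 0. Then d(x_n, x_p) ≥ |n − p|·a for all indices n, p. -/
import Mathlib


/-- The Gromov product `⟨x,y⟩_w = (d(x,w) + d(y,w) − d(x,y))/2` based at `w`. -/
noncomputable def gromovProdAt {X : Type*} [MetricSpace X] (w x y : X) : ℝ :=
  (dist x w + dist y w - dist x y) / 2

/-- In a `δ`-hyperbolic metric space, if a sequence `(x_n)` satisfies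
`d(x_{n+2}, x_n) ≥ max(d(x_{n+2}, x_{n+1}), d(x_{n+1}, x_n)) + a + 2δ` for all
`n`, then `d(x_n, x_p) ≥ |n − p| a`. -/
theorem dist_ge_of_local_progress
    {X : Type*} [MetricSpace X] (δ : ℝ) (hδ : 0 ≤ δ)
    (hhyp : ∀ x y z w : X,
      gromovProdAt w x z ≥ min (gromovProdAt w x y) (gromovProdAt w y z) - δ)
    (a : ℝ) (ha : 0 < a) (x : ℕ → X)
    (hprog : ∀ n : ℕ, dist (x (n + 2)) (x n)
      ≥ max (dist (x (n + 2)) (x (n + 1))) (dist (x (n + 1)) (x n)) + a + 2 * δ) :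
    ∀ n p : ℕ, dist (x n) (x p) ≥ |(n : ℝ) - (p : ℝ)| * a := by
  -- every consecutive distance is at least `a`
  have hc : ∀ n, a ≤ dist (x (n + 1)) (x n) := by
    intro n
    have h := hprog n
    have ht := dist_triangle (x (n + 2)) (x (n + 1)) (x n)
    have h1 := le_max_left (dist (x (n + 2)) (x (n + 1))) (dist (x (n + 1)) (x n))
    linarith
  -- key claim: the Gromov product of `x (m+1)` and `x n` at `x m` is small for `m > n`
  have claim : ∀ n k : ℕ,
      gromovProdAt (x (n + k + 1)) (x (n + k + 2)) (x n)
        ≤ dist (x (n + k + 2)) (x (n + k + 1)) / 2 - a / 2 := by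
    intro n k
    induction k with
    | zero =>
      have h := hprog n
      have h1 := le_max_right (dist (x (n + 2)) (x (n + 1))) (dist (x (n + 1)) (x n))
      have hd : dist (x n) (x (n + 1)) = dist (x (n + 1)) (x n) := dist_comm _ _
      simp only [gromovProdAt, Nat.add_zero]
      linarith
    | succ k ih =>
      have e1 : n + (k + 1) + 1 = n + k + 2 := by omega
      have e2 : n + (k + 1) + 2 = n + k + 3 := by omega
      rw [e1, e2]
      have hA := hprog (n + k + 1)
      have e3 : n + k + 1 + 2 = n + k + 3 := by omega
      have e4 : n + k + 1 + 1 = n + k + 2 := by omega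
      rw [e3, e4] at hA
      have hmin1 := le_max_left (dist (x (n + k + 3)) (x (n + k + 2)))
        (dist (x (n + k + 2)) (x (n + k + 1)))
      have hmin2 := le_max_right (dist (x (n + k + 3)) (x (n + k + 2)))
        (dist (x (n + k + 2)) (x (n + k + 1)))
      -- A := gromovProdAt (x (n+k+2)) (x (n+k+3)) (x (n+k+1))
      -- from hA : 2 A ≤ min (c_m) (c_{m-1}) - a - 2δ
      have hyp := hhyp (x (n + k + 3)) (x n) (x (n + k + 1)) (x (n + k + 2))
      simp only [gromovProdAt] at hyp ih ⊢
      -- dist_comm facts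
      have d1 : dist (x n) (x (n + k + 1)) = dist (x (n + k + 1)) (x n) := dist_comm _ _
      have d2 : dist (x n) (x (n + k + 2)) = dist (x (n + k + 2)) (x n) := dist_comm _ _
      have d3 : dist (x (n + k + 1)) (x (n + k + 2)) =
        dist (x (n + k + 2)) (x (n + k + 1)) := dist_comm _ _
      have d4 : dist (x (n + k + 3)) (x (n + k + 1)) =
        dist (x (n + k + 1)) (x (n + k + 3)) := dist_comm _ _
      rcases le_or_gt
          ((dist (x (n + k + 3)) (x (n + k + 2)) + dist (x n) (x (n + k + 2))
            - dist (x (n + k + 3)) (x n)) / 2)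
          ((dist (x n) (x (n + k + 2)) + dist (x (n + k + 1)) (x (n + k + 2))
            - dist (x n) (x (n + k + 1))) / 2) with hC | hC
      · -- min is the first term
        rw [min_eq_left hC] at hyp
        linarith
      · -- min is the second term: contradiction
        rw [min_eq_right hC.le] at hyp
        linarith
  -- main: dist (x n) (x (n+k)) ≥ k * a
  have main : ∀ n k : ℕ, (k : ℝ) * a ≤ dist (x n) (x (n + k)) := by
    intro n k
    induction k with
    | zero => simp
    | succ k ih =>
      cases k with
      | zero =>
        have := hc n
        rw [dist_comm] at this
        simpa using this
      | succ k =>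
        have hcl := claim n k
        simp only [gromovProdAt] at hcl
        have d1 : dist (x n) (x (n + k + 1)) = dist (x (n + k + 1)) (x n) := dist_comm _ _
        have d2 : dist (x n) (x (n + k + 2)) = dist (x (n + k + 2)) (x n) := dist_comm _ _
        have e1 : n + (k + 1) = n + k + 1 := by omega
        rw [e1] at ih
        have e2 : n + (k + 1 + 1) = n + k + 2 := by omega
        rw [e2]
        push_cast
        push_cast at ih
        linarith
  intro n p
  rcases le_total n p with h | h
  · obtain ⟨k, rfl⟩ := Nat.exists_eq_add_of_le h
    have := main n k
    have habs : |(n : ℝ) - ((n + k : ℕ) : ℝ)| = (k : ℝ) := by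
      push_cast
      rw [abs_sub_comm]
      simp [abs_of_nonneg (show (0:ℝ) ≤ (k:ℝ) by positivity)]
    rw [habs]
    exact this
  · obtain ⟨k, rfl⟩ := Nat.exists_eq_add_of_le h
    have := main p k
    have habs : |((p + k : ℕ) : ℝ) - (p : ℝ)| = (k : ℝ) := by
      push_cast
      simp [abs_of_nonneg (show (0:ℝ) ≤ (k:ℝ) by positivity)]
    rw [habs, dist_comm]
    exact this
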